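/- arXiv:2207.09886 — 2 statements merged into one kernel-verified Lean document; each statement's English description precedes it below -/
import Mathlib

section
/- (Maximum principle for the nonlocal operator P) Let I ⊂ ℝ be an open interval and u ∈ L^∞(ℝ) with u restricted to I of class C². If u(t) ≥ 0 for all t ∈ ℝ and Pu(t) ≥ 0 for all t ∈ I, then either u(t) > 0 for all t ∈ I, or u(t) = 0 for almost every t ∈ ℝ. -/
open MeasureTheory Filter

/-- The principal value integral `P u (t) = P.V. ∫ (u t - u τ) K (t - τ) dτ` equals `L`. -/
def PVat (K u : ℝ → ℝ) (t L : ℝ) : Prop :=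
  Tendsto (fun ε : ℝ => ∫ τ in {τ : ℝ | ε < |t - τ|}, (u t - u τ) * K (t - τ))
    (nhdsWithin 0 (Set.Ioi 0)) (nhds L)

/-!
If `u` vanishes at some `t ∈ I`, the principal value integrand at `t` is `-u(τ) K(t - τ) ≤ 0`.
Hence the truncated integrals `F ε = ∫_{|t - τ| > ε} u(τ) K(t - τ) dτ` are nonnegative, grow as
`ε ↓ 0`, and converge to `-Pu(t) ≤ 0`; so all of them vanish, and since `K > 0` off the origin,
`u = 0` almost everywhere. The kernel bounds make `K` integrable away from the origin, which is
what makes the `F ε` genuine (rather than junk) Bochner integrals.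
-/

open Set

theorem Real.integrable_exp_mul_abs {a : ℝ} (ha : a < 0) :
    Integrable (fun x : ℝ => Real.exp (a * |x|)) := by
  have hpos : IntegrableOn (fun x : ℝ => Real.exp (a * |x|)) (Ioi 0) :=
    (integrableOn_exp_mul_Ioi ha 0).congr_fun
      (fun x (hx : 0 < x) => by rw [abs_of_pos hx]) measurableSet_Ioi
  have hneg : IntegrableOn (fun x : ℝ => Real.exp (a * |x|)) (Iic 0) :=
    (integrableOn_exp_mul_Iic (neg_pos.2 ha) 0).congr_fun
      (fun x (hx : x ≤ 0) => by simp only [abs_of_nonpos hx, neg_mul, mul_neg]) measurableSet_Iic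
  rw [← integrableOn_univ, ← Iic_union_Ioi (a := (0 : ℝ))]
  exact hneg.union hpos

theorem integrableOn_lt_abs_of_le_rpow_of_le_exp {K : ℝ → ℝ} (hK : Measurable K)
    (hKpos : ∀ ξ : ℝ, ξ ≠ 0 → 0 < K ξ) {c p a ε : ℝ} (hp : 0 ≤ p) (ha : a < 0) (hε : 0 < ε)
    (hnear : ∀ ξ : ℝ, ξ ≠ 0 → |ξ| ≤ 1 → K ξ ≤ c * |ξ| ^ (-p))
    (hfar : ∀ ξ : ℝ, 1 ≤ |ξ| → K ξ ≤ c * Real.exp (a * |ξ|)) :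
    IntegrableOn K {ξ | ε < |ξ|} := by
  have hsub : {ξ : ℝ | ε < |ξ|} ⊆ {ξ | ε < |ξ|} ∩ Icc (-1) 1 ∪ {ξ | 1 ≤ |ξ|} := by
    intro ξ hξ
    rcases le_or_gt |ξ| 1 with h | h
    · exact Or.inl ⟨hξ, abs_le.1 h⟩
    · exact Or.inr h.le
  refine IntegrableOn.mono_set (IntegrableOn.union ?_ ?_) hsub
  · refine Measure.integrableOn_of_bounded (M := |c| * ε ^ (-p))
      ((measure_mono inter_subset_right).trans_lt measure_Icc_lt_top).ne
      hK.aestronglyMeasurable ?_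
    refine (ae_restrict_iff' ((measurableSet_lt measurable_const measurable_abs).inter
      measurableSet_Icc)).2 (Eventually.of_forall fun ξ ⟨hεξ, hξ1⟩ => ?_)
    have hξ0 : ξ ≠ 0 := abs_pos.1 (hε.trans hεξ)
    rw [Real.norm_of_nonneg (hKpos ξ hξ0).le]
    calc K ξ ≤ c * |ξ| ^ (-p) := hnear ξ hξ0 (abs_le.2 hξ1)
      _ ≤ |c| * |ξ| ^ (-p) := by gcongr; exact le_abs_self c
      _ ≤ |c| * ε ^ (-p) := mul_le_mul_of_nonneg_left
        (Real.rpow_le_rpow_of_nonpos hε hεξ.le (neg_nonpos.2 hp)) (abs_nonneg c)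
  · refine ((Real.integrable_exp_mul_abs ha).const_mul c).integrableOn.mono'
      hK.aestronglyMeasurable ?_
    refine (ae_restrict_iff' (measurableSet_le measurable_const measurable_abs)).2
      (Eventually.of_forall fun ξ (hξ : 1 ≤ |ξ|) => ?_)
    rw [Real.norm_of_nonneg (hKpos ξ (abs_pos.1 (one_pos.trans_le hξ))).le]
    exact hfar ξ hξ

theorem measurableSet_lt_abs_sub (t ε : ℝ) : MeasurableSet {τ : ℝ | ε < |t - τ|} :=
  measurableSet_lt measurable_const (measurable_const.sub measurable_id).abs

theorem ae_of_forall_ae_restrict_lt_abs_sub {p : ℝ → Prop} (t : ℝ)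
    (h : ∀ ε > 0, ∀ᵐ τ ∂volume.restrict {τ | ε < |t - τ|}, p τ) : ∀ᵐ τ, p τ := by
  have hall : ∀ᵐ τ, ∀ k : ℕ, τ ∈ {τ : ℝ | 1 / ((k : ℝ) + 1) < |t - τ|} → p τ :=
    ae_all_iff.2 fun k =>
      (ae_restrict_iff' (measurableSet_lt_abs_sub t _)).1 (h _ Nat.one_div_pos_of_nat)
  filter_upwards [hall, Measure.ae_ne volume t] with τ hτ hne
  obtain ⟨k, hk⟩ := exists_nat_one_div_lt (abs_pos.2 (sub_ne_zero.2 (Ne.symm hne)))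
  exact hτ k hk

section Truncation

variable {K u : ℝ → ℝ} {t : ℝ}

theorem MeasureTheory.IntegrableOn.mul_comp_sub_left_of_bounded {ε C : ℝ}
    (hK : IntegrableOn K {ξ | ε < |ξ|}) (hu : Measurable u) (hC : ∀ τ, |u τ| ≤ C) :
    IntegrableOn (fun τ => u τ * K (t - τ)) {τ | ε < |t - τ|} := by
  have hKt : IntegrableOn (fun τ => K (t - τ)) {τ | ε < |t - τ|} :=
    ((Measure.measurePreserving_sub_left volume t).integrableOn_comp_preimage
      (Homeomorph.subLeft t).measurableEmbedding).2 hK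
  exact hKt.bdd_mul hu.aestronglyMeasurable (Eventually.of_forall hC)

theorem nonneg_ae_restrict_lt_abs_sub (hKpos : ∀ ξ : ℝ, ξ ≠ 0 → 0 < K ξ)
    (hunonneg : ∀ τ, 0 ≤ u τ) {ε : ℝ} (hε : 0 ≤ ε) :
    0 ≤ᵐ[volume.restrict {τ | ε < |t - τ|}] fun τ => u τ * K (t - τ) :=
  (ae_restrict_iff' (measurableSet_lt_abs_sub t ε)).2 <|
    Eventually.of_forall fun τ (hτ : ε < |t - τ|) =>
      mul_nonneg (hunonneg τ) (hKpos _ (abs_pos.1 (hε.trans_lt hτ))).le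

theorem setIntegral_lt_abs_sub_eq_zero_of_pvAt_nonneg (hKpos : ∀ ξ : ℝ, ξ ≠ 0 → 0 < K ξ)
    (hunonneg : ∀ τ, 0 ≤ u τ) (hut : u t = 0)
    (hint : ∀ ε > 0, IntegrableOn (fun τ => u τ * K (t - τ)) {τ | ε < |t - τ|})
    {L : ℝ} (hPV : PVat K u t L) (hL : 0 ≤ L) {ε : ℝ} (hε : 0 < ε) :
    ∫ τ in {τ | ε < |t - τ|}, u τ * K (t - τ) = 0 := by
  set F : ℝ → ℝ := fun ε => ∫ τ in {τ | ε < |t - τ|}, u τ * K (t - τ)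
  have hF : Tendsto F (nhdsWithin 0 (Ioi 0)) (nhds (-L)) := by
    have hPVF : (fun ε : ℝ => ∫ τ in {τ : ℝ | ε < |t - τ|}, (u t - u τ) * K (t - τ)) = -F := by
      ext ε
      simp only [hut, zero_sub, neg_mul, integral_neg, Pi.neg_apply, F]
    have hPV' : Tendsto (-F) (nhdsWithin 0 (Ioi 0)) (nhds L) := hPVF ▸ hPV
    simpa using hPV'.neg
  have hmono : ∀ᶠ ε' in nhdsWithin 0 (Ioi 0), F ε ≤ F ε' := by
    filter_upwards [Ioo_mem_nhdsGT hε] with ε' ⟨hε'0, hε'ε⟩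
    exact setIntegral_mono_set (hint ε' hε'0)
      (nonneg_ae_restrict_lt_abs_sub hKpos hunonneg hε'0.le)
      (Eventually.of_forall fun τ (hτ : ε < |t - τ|) => hε'ε.trans hτ)
  exact le_antisymm ((ge_of_tendsto hF hmono).trans (neg_nonpos.2 hL))
    (integral_nonneg_of_ae (nonneg_ae_restrict_lt_abs_sub hKpos hunonneg hε.le))

theorem ae_eq_zero_of_pvAt_nonneg (hKpos : ∀ ξ : ℝ, ξ ≠ 0 → 0 < K ξ)
    (hunonneg : ∀ τ, 0 ≤ u τ) (hut : u t = 0)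
    (hint : ∀ ε > 0, IntegrableOn (fun τ => u τ * K (t - τ)) {τ | ε < |t - τ|})
    {L : ℝ} (hPV : PVat K u t L) (hL : 0 ≤ L) : u =ᵐ[volume] 0 := by
  refine ae_of_forall_ae_restrict_lt_abs_sub t fun ε hε => ?_
  have hzero := (setIntegral_eq_zero_iff_of_nonneg_ae
    (nonneg_ae_restrict_lt_abs_sub hKpos hunonneg hε.le) (hint ε hε)).1
    (setIntegral_lt_abs_sub_eq_zero_of_pvAt_nonneg hKpos hunonneg hut hint hPV hL hε)
  filter_upwards [hzero, ae_restrict_mem (measurableSet_lt_abs_sub t ε)]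
    with τ hτ (hmem : ε < |t - τ|)
  exact (mul_eq_zero.1 hτ).resolve_right (hKpos _ (abs_pos.1 (hε.trans hmem))).ne'

end Truncation

theorem stmt1_general (n s : ℝ) (hs0 : 0 < s) (hn : 2 * s < n)
    (K : ℝ → ℝ) (hKmeas : Measurable K)
    (hKpos : ∀ ξ : ℝ, ξ ≠ 0 → 0 < K ξ)
    (c₁ c₂ : ℝ)
    (hK0 : ∀ ξ : ℝ, ξ ≠ 0 → |ξ| ≤ 1 →
      c₁ * |ξ| ^ (-(1 + 2 * s)) ≤ K ξ ∧ K ξ ≤ c₂ * |ξ| ^ (-(1 + 2 * s)))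
    (hKinf : ∀ ξ : ℝ, 1 ≤ |ξ| →
      c₁ * Real.exp (-(n + 2 * s) / 2 * |ξ|) ≤ K ξ ∧
      K ξ ≤ c₂ * Real.exp (-(n + 2 * s) / 2 * |ξ|))
    (a b : ℝ) (u : ℝ → ℝ) (humeas : Measurable u)
    (hubdd : ∃ C : ℝ, ∀ t, |u t| ≤ C)
    (hunonneg : ∀ t : ℝ, 0 ≤ u t)
    (Pu : ℝ → ℝ) (hPu : ∀ t ∈ Set.Ioo a b, PVat K u t (Pu t))
    (hPu0 : ∀ t ∈ Set.Ioo a b, 0 ≤ Pu t) :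
    (∀ t ∈ Set.Ioo a b, 0 < u t) ∨ (u =ᵐ[volume] (0 : ℝ → ℝ)) := by
  refine or_iff_not_imp_left.2 fun hpos => ?_
  push Not at hpos
  obtain ⟨t, ht, hut⟩ := hpos
  obtain ⟨C, hC⟩ := hubdd
  have hKint (ε : ℝ) (hε : 0 < ε) : IntegrableOn K {ξ | ε < |ξ|} :=
    integrableOn_lt_abs_of_le_rpow_of_le_exp hKmeas hKpos (by linarith)
      (by linarith : -(n + 2 * s) / 2 < 0) hε (fun ξ h0 h1 => (hK0 ξ h0 h1).2)
      (fun ξ h => (hKinf ξ h).2)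
  exact ae_eq_zero_of_pvAt_nonneg hKpos hunonneg (le_antisymm hut (hunonneg t))
    (fun ε hε => (hKint ε hε).mul_comp_sub_left_of_bounded humeas hC) (hPu t ht) (hPu0 t ht)

/-- Maximum principle for the nonlocal operator `P`. -/
theorem stmt1 (n s : ℝ) (hs0 : 0 < s) (hs1 : s < 1) (hn : 2 * s < n)
    (K : ℝ → ℝ) (hKmeas : Measurable K) (hKeven : ∀ ξ : ℝ, K (-ξ) = K ξ)
    (hKpos : ∀ ξ : ℝ, ξ ≠ 0 → 0 < K ξ)
    (c₁ c₂ : ℝ) (hc₁ : 0 < c₁) (hc₂ : 0 < c₂)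
    (hK0 : ∀ ξ : ℝ, ξ ≠ 0 → |ξ| ≤ 1 →
      c₁ * |ξ| ^ (-(1 + 2 * s)) ≤ K ξ ∧ K ξ ≤ c₂ * |ξ| ^ (-(1 + 2 * s)))
    (hKinf : ∀ ξ : ℝ, 1 ≤ |ξ| →
      c₁ * Real.exp (-(n + 2 * s) / 2 * |ξ|) ≤ K ξ ∧
      K ξ ≤ c₂ * Real.exp (-(n + 2 * s) / 2 * |ξ|))
    (a b : ℝ) (u : ℝ → ℝ) (humeas : Measurable u)
    (hubdd : ∃ C : ℝ, ∀ t, |u t| ≤ C)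
    (hureg : ContDiffOn ℝ 2 u (Set.Ioo a b))
    (hunonneg : ∀ t : ℝ, 0 ≤ u t)
    (Pu : ℝ → ℝ) (hPu : ∀ t ∈ Set.Ioo a b, PVat K u t (Pu t))
    (hPu0 : ∀ t ∈ Set.Ioo a b, 0 ≤ Pu t) :
    (∀ t ∈ Set.Ioo a b, 0 < u t) ∨ (u =ᵐ[volume] (0 : ℝ → ℝ)) :=
  stmt1_general n s hs0 hn K hKmeas hKpos c₁ c₂ hK0 hKinf a b u humeas hubdd hunonneg Pu hPu hPu0
end

section
/- (Oscillation implies derivative mass) Let v ∈ C¹(ℝ) satisfy the Oscillation Condition with constants M, ε > 0: on every interval of length M, max v > 1 + ε and min v < 1 − ε. Then for every interval I = [a,b] with b − a ≥ 5M there exist points a < x₀ < x₁ < b with v'(x₀) = v'(x₁) = 0, ∫_{x₀}^{x₁} (v'(t))⁺ dt > 2ε, and ∫_{x₀}^{x₁} (v'(t))⁻ dt > 2ε. -/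
open MeasureTheory Filter

/-- The Oscillation Condition with constants `M, ε`: on every interval of length `M`,
`v` exceeds `1 + ε` somewhere and drops below `1 - ε` somewhere. -/
def OscCond (v : ℝ → ℝ) (M ε : ℝ) : Prop :=
  ∀ a : ℝ, (∃ t ∈ Set.Icc a (a + M), 1 + ε < v t) ∧
    (∃ t ∈ Set.Icc a (a + M), v t < 1 - ε)

/-!
Split `[a, a + 5M]` into five intervals of length `M` and pick from them alternately a point
`pᵢ` with `v > 1 + ε` and a point `qⱼ` with `v < 1 - ε`. Minimising `v` over `[p₀, p₂]` and
over `[p₂, p₄]` gives interior critical points `x₀ < p₂ < x₁` with `v < 1 - ε`, so `v` rises by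
more than `2ε` on `[x₀, p₂]` and falls by more than `2ε` on `[p₂, x₁]`; by the fundamental
theorem of calculus these are lower bounds for the integrals of `(v')⁺` and `(v')⁻`.
-/

open Set intervalIntegral

theorem integral_le_integral_max_zero {g : ℝ → ℝ} {p q s r : ℝ} (hpq : p ≤ q) (hqs : q ≤ s)
    (hsr : s ≤ r) (hg : IntervalIntegrable g volume p r) :
    ∫ t in q..s, g t ≤ ∫ t in p..r, max (g t) 0 := by
  have hg' : IntervalIntegrable (fun t => max (g t) 0) volume p r :=
    ⟨hg.1.pos_part, hg.2.pos_part⟩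
  have hsub : uIcc q s ⊆ uIcc p r :=
    uIcc_subset_uIcc (mem_uIcc_of_le hpq (hqs.trans hsr)) (mem_uIcc_of_le (hpq.trans hqs) hsr)
  calc ∫ t in q..s, g t ≤ ∫ t in q..s, max (g t) 0 :=
        integral_mono_on hqs (hg.mono_set hsub) (hg'.mono_set hsub) fun _ _ => le_max_left _ _
    _ ≤ ∫ t in p..r, max (g t) 0 :=
        integral_mono_interval hpq hqs hsr (ae_of_all _ fun _ => le_max_right _ _) hg'

theorem exists_mem_Ioo_deriv_eq_zero_le {v : ℝ → ℝ} {p q r : ℝ} (hv : ContinuousOn v (Icc p r))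
    (hq : q ∈ Icc p r) (hqp : v q < v p) (hqr : v q < v r) :
    ∃ x ∈ Ioo p r, deriv v x = 0 ∧ v x ≤ v q := by
  obtain ⟨x, hx, hmin⟩ := isCompact_Icc.exists_isMinOn ⟨q, hq⟩ hv
  have hxq : v x ≤ v q := hmin hq
  have hpx : p < x := hx.1.lt_of_ne fun h => (h ▸ hxq).not_gt hqp
  have hxr : x < r := hx.2.lt_of_ne fun h => (h ▸ hxq).not_gt hqr
  exact ⟨x, ⟨hpx, hxr⟩, (hmin.isLocalMin (Icc_mem_nhds hpx hxr)).deriv_eq_zero, hxq⟩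

section ContDiff

variable {v : ℝ → ℝ} {x₀ p x₁ : ℝ}

theorem integral_deriv_eq_sub_of_contDiff (hv : ContDiff ℝ 1 v) (s t : ℝ) :
    ∫ u in s..t, deriv v u = v t - v s :=
  integral_deriv_eq_sub (fun x _ => hv.differentiable one_ne_zero x)
    ((hv.continuous_deriv le_rfl).intervalIntegrable s t)

theorem sub_le_integral_max_deriv_zero (hv : ContDiff ℝ 1 v) (h₀ : x₀ ≤ p) (h₁ : p ≤ x₁) :
    v p - v x₀ ≤ ∫ t in x₀..x₁, max (deriv v t) 0 := by
  rw [← integral_deriv_eq_sub_of_contDiff hv]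
  exact integral_le_integral_max_zero le_rfl h₀ h₁
    ((hv.continuous_deriv le_rfl).intervalIntegrable _ _)

theorem sub_le_integral_max_neg_deriv_zero (hv : ContDiff ℝ 1 v) (h₀ : x₀ ≤ p) (h₁ : p ≤ x₁) :
    v p - v x₁ ≤ ∫ t in x₀..x₁, max (-deriv v t) 0 := by
  rw [← neg_sub, ← integral_deriv_eq_sub_of_contDiff hv, ← intervalIntegral.integral_neg]
  exact integral_le_integral_max_zero h₀ h₁ le_rfl
    ((hv.continuous_deriv le_rfl).neg.intervalIntegrable _ _)

end ContDiff

theorem stmt15_general (v : ℝ → ℝ) (hv : ContDiff ℝ 1 v)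
    (M ε : ℝ) (hε : 0 < ε) (hosc : OscCond v M ε) :
    ∀ a b : ℝ, 5 * M ≤ b - a →
      ∃ x₀ x₁ : ℝ, a < x₀ ∧ x₀ < x₁ ∧ x₁ < b ∧
        deriv v x₀ = 0 ∧ deriv v x₁ = 0 ∧
        2 * ε < ∫ t in x₀..x₁, max (deriv v t) 0 ∧
        2 * ε < ∫ t in x₀..x₁, max (-(deriv v t)) 0 := by
  intro a b hab
  obtain ⟨⟨p₀, hp₀, hvp₀⟩, -⟩ := hosc a
  obtain ⟨-, q₁, hq₁, hvq₁⟩ := hosc (a + M)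
  obtain ⟨⟨p₂, hp₂, hvp₂⟩, -⟩ := hosc (a + 2 * M)
  obtain ⟨-, q₃, hq₃, hvq₃⟩ := hosc (a + 3 * M)
  obtain ⟨⟨p₄, hp₄, hvp₄⟩, -⟩ := hosc (a + 4 * M)
  have hq₁p : q₁ ∈ Icc p₀ p₂ := ⟨by linarith [hp₀.2, hq₁.1], by linarith [hq₁.2, hp₂.1]⟩
  have hq₃p : q₃ ∈ Icc p₂ p₄ := ⟨by linarith [hp₂.2, hq₃.1], by linarith [hq₃.2, hp₄.1]⟩
  obtain ⟨x₀, hx₀, hd₀, hvx₀⟩ := exists_mem_Ioo_deriv_eq_zero_le hv.continuous.continuousOn hq₁p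
    (by linarith) (by linarith)
  obtain ⟨x₁, hx₁, hd₁, hvx₁⟩ := exists_mem_Ioo_deriv_eq_zero_le hv.continuous.continuousOn hq₃p
    (by linarith) (by linarith)
  have hrise := sub_le_integral_max_deriv_zero hv hx₀.2.le hx₁.1.le
  have hfall := sub_le_integral_max_neg_deriv_zero hv hx₀.2.le hx₁.1.le
  refine ⟨x₀, x₁, by linarith [hp₀.1, hx₀.1], hx₀.2.trans hx₁.1, by linarith [hx₁.2, hp₄.2],
    hd₀, hd₁, by linarith, by linarith⟩

/-- Oscillation implies derivative mass: in every interval of length `≥ 5M` there are two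
critical points between which both the positive and the negative part of `v'` have
integral greater than `2ε`. -/
theorem stmt15 (v : ℝ → ℝ) (hv : ContDiff ℝ 1 v)
    (M ε : ℝ) (hM : 0 < M) (hε : 0 < ε) (hosc : OscCond v M ε) :
    ∀ a b : ℝ, 5 * M ≤ b - a →
      ∃ x₀ x₁ : ℝ, a < x₀ ∧ x₀ < x₁ ∧ x₁ < b ∧
        deriv v x₀ = 0 ∧ deriv v x₁ = 0 ∧
        2 * ε < ∫ t in x₀..x₁, max (deriv v t) 0 ∧
        2 * ε < ∫ t in x₀..x₁, max (-(deriv v t)) 0 :=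
  stmt15_general v hv M ε hε hosc
end
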